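/- arXiv:1501.01777 — 3 statements merged into one kernel-verified Lean document; each statement's English description precedes it below -/
import Mathlib

section
/- Let $a > 3/2$, $\varepsilon \in (0,1)$, and let $f:\mathbb{R}\to\mathbb{R}$ satisfy $f(x) = e^{x^2/4} x^{-a}(2\pi)^{1/4}$ for $x \geq \sqrt{2a}$ and be bounded, nonnegative, and nondecreasing on $[\sqrt{2a},\infty)$. Then $\int_{\mathbb{R}} \left|\frac{f(x+\varepsilon)-f(x)}{\varepsilon}\right|^2 \phi(x)\,dx = +\infty$, where $\phi$ is the standard Gaussian density. -/
/-!
For large `x` the profile `g(x) = e^{x²/4} x^{-a} (2π)^{1/4}` grows so fast that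
`g(x) / g(x + ε) → 0`; hence the difference quotient of `f` is asymptotic to `g(x + ε) / ε`.
Against the Gaussian weight, `g(x + ε)² φ(x) = e^{-ε²/2} e^{ε(x + ε)} (x + ε)^{-2a} → ∞`,
so the integrand tends to infinity and its integral over a half-line already diverges.
-/

open MeasureTheory Real Set Filter Topology

theorem lintegral_ofReal_eq_top_of_tendsto_atTop {g : ℝ → ℝ} (hg : Tendsto g atTop atTop) :
    ∫⁻ x, ENNReal.ofReal (g x) = ⊤ := by
  obtain ⟨M, hM⟩ := eventually_atTop.mp (hg.eventually_ge_atTop 1)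
  rw [eq_top_iff]
  calc (⊤ : ENNReal) = ∫⁻ _ in Ici M, 1 := by rw [setLIntegral_one, Real.volume_Ici]
    _ ≤ ∫⁻ x in Ici M, ENNReal.ofReal (g x) :=
        setLIntegral_mono' measurableSet_Ici fun x hx => ENNReal.one_le_ofReal.mpr (hM x hx)
    _ ≤ ∫⁻ x, ENNReal.ofReal (g x) := setLIntegral_le_lintegral _ _

noncomputable def gaussianTailProfile (a x : ℝ) : ℝ :=
  exp (x ^ 2 / 4) * x ^ (-a) * (2 * π) ^ ((1 : ℝ) / 4)

namespace gaussianTailProfile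

variable {a ε x : ℝ}

theorem pos (hx : 0 < x) : 0 < gaussianTailProfile a x := by
  unfold gaussianTailProfile; positivity

theorem div_eq_exp_mul_rpow (hε : 0 < ε) (hx : 0 < x) :
    gaussianTailProfile a x / gaussianTailProfile a (x + ε) =
      exp (-(ε / 2 * x + ε ^ 2 / 4)) * (1 + ε / x) ^ a := by
  rw [show 1 + ε / x = (x + ε) / x by field_simp, div_rpow (by linarith) hx.le,
    gaussianTailProfile, gaussianTailProfile, rpow_neg hx.le, rpow_neg (by linarith),
    show -(ε / 2 * x + ε ^ 2 / 4) = x ^ 2 / 4 - (x + ε) ^ 2 / 4 by ring, exp_sub]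
  have : 0 < (x + ε) ^ a := rpow_pos_of_pos (by linarith) a
  have : 0 < x ^ a := rpow_pos_of_pos hx a
  have : (0 : ℝ) < (2 * π) ^ ((1 : ℝ) / 4) := by positivity
  field_simp

theorem tendsto_div_add (hε : 0 < ε) :
    Tendsto (fun x => gaussianTailProfile a x / gaussianTailProfile a (x + ε)) atTop (𝓝 0) := by
  have hexp : Tendsto (fun x => exp (-(ε / 2 * x + ε ^ 2 / 4))) atTop (𝓝 0) :=
    tendsto_exp_atBot.comp <| tendsto_neg_atTop_atBot.comp <|
      tendsto_atTop_add_const_right _ _ (tendsto_id.const_mul_atTop (by positivity))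
  have hpow : Tendsto (fun x => (1 + ε / x) ^ a) atTop (𝓝 1) := by
    simpa using ((tendsto_const_nhds (x := (1 : ℝ))).add
      (tendsto_const_nhds.div_atTop tendsto_id)).rpow_const (p := a) (Or.inl (by norm_num))
  refine (zero_mul (1 : ℝ) ▸ hexp.mul hpow).congr' ?_
  filter_upwards [eventually_gt_atTop 0] with x hx
  exact (div_eq_exp_mul_rpow hε hx).symm

theorem sq_add_mul_gaussian (hx : 0 < x + ε) :
    gaussianTailProfile a (x + ε) ^ 2 * (exp (-x ^ 2 / 2) / sqrt (2 * π)) =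
      exp (-(ε ^ 2 / 2)) * (exp (ε * (x + ε)) / (x + ε) ^ (2 * a)) := by
  have hexp : exp ((x + ε) ^ 2 / 4) ^ 2 * exp (-x ^ 2 / 2) =
      exp (-(ε ^ 2 / 2)) * exp (ε * (x + ε)) := by
    rw [sq, ← exp_add, ← exp_add, ← exp_add]
    ring_nf
  have hrpow : ((x + ε) ^ (-a)) ^ 2 = ((x + ε) ^ (2 * a))⁻¹ := by
    rw [rpow_neg hx.le, inv_pow, ← rpow_mul_natCast hx.le, Nat.cast_ofNat, mul_comm]
  have hconst : ((2 * π) ^ ((1 : ℝ) / 4)) ^ 2 = sqrt (2 * π) := by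
    rw [← rpow_mul_natCast (by positivity), sqrt_eq_rpow]
    norm_num
  have : 0 < sqrt (2 * π) := by positivity
  rw [gaussianTailProfile, mul_pow, mul_pow, hrpow, hconst, mul_div_assoc', mul_div_assoc', ← hexp]
  field_simp

theorem tendsto_sq_add_mul_gaussian (hε : 0 < ε) :
    Tendsto (fun x => gaussianTailProfile a (x + ε) ^ 2 * (exp (-x ^ 2 / 2) / sqrt (2 * π)))
      atTop atTop := by
  refine (((tendsto_exp_mul_div_rpow_atTop (2 * a) ε hε).comp
    (tendsto_atTop_add_const_right _ ε tendsto_id)).const_mul_atTop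
      (exp_pos (-(ε ^ 2 / 2)))).congr' ?_
  filter_upwards [eventually_gt_atTop (-ε)] with x hx
  exact (sq_add_mul_gaussian (x := x) (by linarith)).symm

end gaussianTailProfile

theorem stmt3_general (a : ℝ) (ε : ℝ) (hε : ε ∈ Ioo (0 : ℝ) 1)
    (f φ : ℝ → ℝ)
    (hf : ∀ x ≥ Real.sqrt (2 * a),
      f x = Real.exp (x ^ 2 / 4) * x ^ (-a) * (2 * π) ^ ((1 : ℝ) / 4))
    (hφ : ∀ x, φ x = Real.exp (-x ^ 2 / 2) / Real.sqrt (2 * π)) :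
    ∫⁻ x, ENNReal.ofReal (|(f (x + ε) - f x) / ε| ^ 2 * φ x) = ⊤ := by
  have hε0 : 0 < ε := hε.1
  have hf' : ∀ x ≥ sqrt (2 * a), f x = gaussianTailProfile a x := hf
  have hlim : Tendsto (fun x => (1 - gaussianTailProfile a x / gaussianTailProfile a (x + ε)) ^ 2
      / ε ^ 2) atTop (𝓝 (1 / ε ^ 2)) := by
    simpa using (((tendsto_const_nhds (x := (1 : ℝ))).sub
      (gaussianTailProfile.tendsto_div_add hε0)).pow 2).div_const (ε ^ 2)
  refine lintegral_ofReal_eq_top_of_tendsto_atTop <|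
    ((gaussianTailProfile.tendsto_sq_add_mul_gaussian (a := a) hε0).atTop_mul_pos (by positivity)
      hlim).congr' ?_
  filter_upwards [eventually_ge_atTop (sqrt (2 * a)), eventually_gt_atTop 0] with x hx hx0
  have := (gaussianTailProfile.pos (a := a) (x := x + ε) (by linarith)).ne'
  rw [hφ, hf' x hx, hf' (x + ε) (by linarith), sq_abs]
  field_simp

/-- let `a > 3/2`, `ε ∈ (0,1)`, and let `f : ℝ → ℝ` equal
`e^{x²/4} x^{-a} (2π)^{1/4}` on `[√(2a), ∞)`, be bounded off `[√(2a), ∞)`, and be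
nonnegative and nondecreasing on `[√(2a), ∞)`. Then
`∫_ℝ |(f(x+ε) - f(x))/ε|² φ(x) dx = +∞`. -/
theorem stmt3 (a : ℝ) (ha : 3 / 2 < a) (ε : ℝ) (hε : ε ∈ Ioo (0 : ℝ) 1)
    (f φ : ℝ → ℝ)
    (hf : ∀ x ≥ Real.sqrt (2 * a),
      f x = Real.exp (x ^ 2 / 4) * x ^ (-a) * (2 * π) ^ ((1 : ℝ) / 4))
    (hbdd : ∃ C, ∀ x < Real.sqrt (2 * a), |f x| ≤ C)
    (hnonneg : ∀ x ≥ Real.sqrt (2 * a), 0 ≤ f x)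
    (hmono : MonotoneOn f (Ici (Real.sqrt (2 * a))))
    (hφ : ∀ x, φ x = Real.exp (-x ^ 2 / 2) / Real.sqrt (2 * π)) :
    ∫⁻ x, ENNReal.ofReal (|(f (x + ε) - f x) / ε| ^ 2 * φ x) = ⊤ :=
  stmt3_general a ε hε f φ hf hφ
end

section
/- For $a > 3/2$, $q' \in (1,2)$, and any family of points $s^x_\varepsilon \in (0,\varepsilon) \subset (0,1)$, one has $\sup_{\varepsilon \in (0,1)} \int_{\sqrt{2a}}^{\infty} e^{\frac{q'(s^x_\varepsilon)^2 + 2q' s^x_\varepsilon x}{4}} \left| -a(x+s^x_\varepsilon)^{-a-1} + \tfrac12 (x+s^x_\varepsilon)^{1-a} \right|^{q'} e^{\frac{x^2(q'/2 - 1)}{2}}\,dx < +\infty$. -/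
open MeasureTheory Real Set
open scoped ENNReal

/-- for `a > 3/2`, `q' ∈ (1,2)` and any family of points
`s ε x ∈ (0, ε) ⊂ (0,1)`, the family of integrals
`∫_{√(2a)}^∞ e^{(q' s² + 2 q' s x)/4} | -a(x+s)^{-a-1} + (x+s)^{1-a}/2 |^{q'}
e^{x²(q'/2-1)/2} dx` (with `s = s ε x`) is bounded uniformly in `ε ∈ (0,1)`. -/
theorem stmt6 (a : ℝ) (ha : 3 / 2 < a) (q' : ℝ) (hq' : q' ∈ Ioo (1 : ℝ) 2)
    (s : ℝ → ℝ → ℝ) (hs : ∀ ε ∈ Ioo (0 : ℝ) 1, ∀ x, s ε x ∈ Ioo (0 : ℝ) ε) :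
    ∃ C : ℝ≥0∞, C ≠ ⊤ ∧ ∀ ε ∈ Ioo (0 : ℝ) 1,
      ∫⁻ x in Ici (Real.sqrt (2 * a)),
        ENNReal.ofReal
          (Real.exp ((q' * (s ε x) ^ 2 + 2 * q' * (s ε x) * x) / 4) *
            |(-a) * (x + s ε x) ^ (-a - 1) + (1 / 2) * (x + s ε x) ^ (1 - a)| ^ q' *
            Real.exp (x ^ 2 * (q' / 2 - 1) / 2)) ≤ C := by
  obtain ⟨hq1, hq2⟩ := hq'
  set b : ℝ := (1 - q' / 2) / 2 with hb_def
  have hb : 0 < b := by simp only [hb_def]; linarith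
  set m : ℝ := q' / (4 * b) with hm_def
  have ha1 : (1 : ℝ) ≤ a + 1 / 2 := by linarith
  set K : ℝ := (a + 1 / 2) ^ (2 : ℝ) * Real.exp (q' / 4 + q' ^ 2 / (16 * b)) with hK_def
  set g : ℝ → ℝ := fun x => K * Real.exp (-b * (x - m) ^ 2) with hg_def
  have hg_eq : ∀ x : ℝ, g x =
      (a + 1 / 2) ^ (2 : ℝ) *
        (Real.exp ((q' + 2 * q' * x) / 4) * Real.exp (x ^ 2 * (q' / 2 - 1) / 2)) := by
    intro x
    simp only [hg_def, hK_def, ← Real.exp_add, mul_assoc]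
    congr 2
    have h2q : (2 : ℝ) - q' ≠ 0 := by linarith
    rw [hm_def, hb_def]
    field_simp
    ring
  have hgint : Integrable g :=
    ((integrable_exp_neg_mul_sq hb).comp_sub_right m).const_mul K
  refine ⟨∫⁻ x in Ici (Real.sqrt (2 * a)), ENNReal.ofReal (g x), ?_, ?_⟩
  · have h := (hgint.restrict (s := Ici (Real.sqrt (2 * a)))).hasFiniteIntegral
    rw [hasFiniteIntegral_iff_ofReal] at h
    · exact h.ne
    · filter_upwards with x
      simp only [hg_def, hK_def]
      positivity
  · intro ε hε
    refine setLIntegral_mono ?_ ?_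
    · exact ENNReal.measurable_ofReal.comp (by fun_prop)
    intro x hx
    apply ENNReal.ofReal_le_ofReal
    rw [hg_eq]
    set t : ℝ := s ε x with ht_def
    obtain ⟨ht0, htε⟩ := hs ε hε x
    rw [← ht_def] at ht0 htε
    have ht1 : t < 1 := htε.trans hε.2
    have hx1 : (1 : ℝ) ≤ x := by
      refine le_trans ?_ hx
      rw [show (1 : ℝ) = Real.sqrt 1 by simp]
      exact Real.sqrt_le_sqrt (by linarith)
    have hxt1 : (1 : ℝ) ≤ x + t := by linarith
    have hxt0 : (0 : ℝ) < x + t := by linarith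
    have h1 : Real.exp ((q' * t ^ 2 + 2 * q' * t * x) / 4) ≤
        Real.exp ((q' + 2 * q' * x) / 4) := by
      apply Real.exp_le_exp.mpr
      have ht2 : t ^ 2 ≤ 1 := by nlinarith [mul_pos (by linarith : (0:ℝ) < 1 - t) (by linarith : (0:ℝ) < 1 + t)]
      have h2 : q' * t ^ 2 ≤ q' := by nlinarith
      have h3 : 2 * q' * t * x ≤ 2 * q' * x := by nlinarith
      linarith
    have hP : |(-a) * (x + t) ^ (-a - 1) + (1 / 2) * (x + t) ^ (1 - a)| ≤ a + 1 / 2 := by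
      have hr1 : (x + t) ^ (-a - 1) ≤ 1 :=
        Real.rpow_le_one_of_one_le_of_nonpos hxt1 (by linarith)
      have hr2 : (x + t) ^ (1 - a) ≤ 1 :=
        Real.rpow_le_one_of_one_le_of_nonpos hxt1 (by linarith)
      have hn1 : (0 : ℝ) ≤ (x + t) ^ (-a - 1) := Real.rpow_nonneg hxt0.le _
      have hn2 : (0 : ℝ) ≤ (x + t) ^ (1 - a) := Real.rpow_nonneg hxt0.le _
      calc |(-a) * (x + t) ^ (-a - 1) + (1 / 2) * (x + t) ^ (1 - a)|
          ≤ |(-a) * (x + t) ^ (-a - 1)| + |(1 / 2) * (x + t) ^ (1 - a)| := abs_add_le _ _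
        _ = a * (x + t) ^ (-a - 1) + (1 / 2) * (x + t) ^ (1 - a) := by
            rw [abs_mul, abs_mul, abs_neg, abs_of_nonneg hn1, abs_of_nonneg hn2,
              abs_of_nonneg (by linarith : (0:ℝ) ≤ a), abs_of_nonneg (by norm_num : (0:ℝ) ≤ (1:ℝ)/2)]
        _ ≤ a * 1 + (1 / 2) * 1 := by
            gcongr <;> linarith
        _ = a + 1 / 2 := by ring
    have h2 : |(-a) * (x + t) ^ (-a - 1) + (1 / 2) * (x + t) ^ (1 - a)| ^ q' ≤
        (a + 1 / 2) ^ (2 : ℝ) := by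
      calc |(-a) * (x + t) ^ (-a - 1) + (1 / 2) * (x + t) ^ (1 - a)| ^ q'
          ≤ (a + 1 / 2) ^ q' := Real.rpow_le_rpow (abs_nonneg _) hP (by linarith)
        _ ≤ (a + 1 / 2) ^ (2 : ℝ) :=
            Real.rpow_le_rpow_of_exponent_le ha1 hq2.le
    have hnn : (0 : ℝ) ≤ |(-a) * (x + t) ^ (-a - 1) + (1 / 2) * (x + t) ^ (1 - a)| ^ q' :=
      Real.rpow_nonneg (abs_nonneg _) _
    calc Real.exp ((q' * t ^ 2 + 2 * q' * t * x) / 4) *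
          |(-a) * (x + t) ^ (-a - 1) + (1 / 2) * (x + t) ^ (1 - a)| ^ q' *
          Real.exp (x ^ 2 * (q' / 2 - 1) / 2)
        ≤ Real.exp ((q' + 2 * q' * x) / 4) * (a + 1 / 2) ^ (2 : ℝ) *
          Real.exp (x ^ 2 * (q' / 2 - 1) / 2) := by
          gcongr <;> positivity
      _ = (a + 1 / 2) ^ (2 : ℝ) *
          (Real.exp ((q' + 2 * q' * x) / 4) * Real.exp (x ^ 2 * (q' / 2 - 1) / 2)) := by ring
end

section
/- Let $0 < \mu < e^{-1}$ and $F'(x) = \frac{1}{2\sqrt{x}(\log x)^3} - \frac{1}{\sqrt{x}(\log x)^4}$ on $(0,\mu]$. Then with $\psi(x) = x|\log x|$ for $x > 0$, one has $\int_0^\mu \psi(|F'(x)|^2)\,dx < +\infty$. -/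
open MeasureTheory Real Set Filter Topology

/-! Writing `ℓ = -log x ≥ 1`, one has `F'(x)² = (ℓ + 2)² / (4 x ℓ⁸) ≤ 9 / (4 x ℓ⁶)` and
`|log F'(x)²| ≤ 16 ℓ`, so `ψ(F'(x)²) ≤ 36 / (x ℓ⁵)`. The Bertrand integrand `1 / (x (-log x)^p)`
is integrable near `0` for `p > 1`, being the derivative of `(-log x)^(1-p) / (p - 1)`. -/

theorem integrableOn_one_div_mul_neg_log_rpow {c p : ℝ} (hc : c < 1) (hp : 1 < p) :
    IntegrableOn (fun x => 1 / (x * (-log x) ^ p)) (Ioc 0 c) := by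
  set G : ℝ → ℝ := fun x => (-log x) ^ (1 - p) / (p - 1)
  have hneg_log : ∀ x ∈ Ioc 0 c, 0 < -log x := fun x hx =>
    neg_pos.2 (log_neg hx.1 (hx.2.trans_lt hc))
  have hG_cont : ContinuousOn G (Icc 0 c) := by
    intro x hx
    rcases hx.1.eq_or_lt with rfl | hx0
    · refine (continuousWithinAt_Ioi_iff_Ici.1 ?_).mono Icc_subset_Ici_self
      -- `log 0 = 0` and `0 ^ (1 - p) = 0`, so the junk value `G 0` is the right limit.
      have hG0 : G 0 = 0 := by simp [G, zero_rpow (sub_ne_zero.2 hp.ne)]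
      rw [ContinuousWithinAt, hG0]
      simpa using ((tendsto_rpow_neg_atTop (sub_pos.2 hp)).comp
        (tendsto_neg_atBot_atTop.comp tendsto_log_nhdsGT_zero)).div_const (p - 1)
    · exact (((continuousAt_log hx0.ne').neg.rpow_const
        (Or.inl (hneg_log x ⟨hx0, hx.2⟩).ne')).div_const _).continuousWithinAt
  have hG_deriv : ∀ x ∈ Ioo 0 c, HasDerivAt G (1 / (x * (-log x) ^ p)) x := by
    intro x hx
    have hℓ := hneg_log x (Ioo_subset_Ioc_self hx)
    refine (((hasDerivAt_log hx.1.ne').neg.rpow_const (p := 1 - p)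
      (Or.inl hℓ.ne')).div_const (p - 1)).congr_deriv ?_
    rw [sub_sub_cancel_left, Pi.neg_apply, rpow_neg hℓ.le]
    field_simp [(sub_pos.2 hp).ne']
    ring
  exact intervalIntegral.integrableOn_deriv_of_nonneg hG_cont hG_deriv fun x hx =>
    (one_div_pos.2 (mul_pos hx.1 (rpow_pos_of_pos (hneg_log x (Ioo_subset_Ioc_self hx)) p))).le

theorem mul_abs_log_le {x ℓ : ℝ} (hx : 0 < x) (hℓ : 1 ≤ ℓ) (hxℓ : log x = -ℓ) :
    (ℓ + 2) ^ 2 / (4 * x * ℓ ^ 8) * |log ((ℓ + 2) ^ 2 / (4 * x * ℓ ^ 8))|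
      ≤ 36 / (x * ℓ ^ 5) := by
  have hℓ0 : 0 < ℓ := zero_lt_one.trans_le hℓ
  have ht_le : (ℓ + 2) ^ 2 / (4 * x * ℓ ^ 8) ≤ 9 / (4 * x * ℓ ^ 6) := by
    rw [div_le_div_iff₀ (by positivity) (by positivity)]
    have : (ℓ + 2) ^ 2 ≤ 9 * ℓ ^ 2 := by nlinarith
    calc (ℓ + 2) ^ 2 * (4 * x * ℓ ^ 6) ≤ 9 * ℓ ^ 2 * (4 * x * ℓ ^ 6) := by gcongr
      _ = 9 * (4 * x * ℓ ^ 8) := by ring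
  have hlog_t : log ((ℓ + 2) ^ 2 / (4 * x * ℓ ^ 8))
      = 2 * log (ℓ + 2) - log 4 + ℓ - 8 * log ℓ := by
    rw [log_div (by positivity) (by positivity), log_mul (by positivity) (by positivity),
      log_mul (by norm_num) hx.ne', log_pow, log_pow, hxℓ]
    push_cast
    ring
  have habs_log_t : |log ((ℓ + 2) ^ 2 / (4 * x * ℓ ^ 8))| ≤ 16 * ℓ := by
    have h₁ := log_le_sub_one_of_pos (by positivity : 0 < ℓ + 2)
    have h₂ := log_le_sub_one_of_pos hℓ0
    have h₃ := log_le_sub_one_of_pos (by norm_num : (0 : ℝ) < 4)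
    have h₄ := log_nonneg (by linarith : 1 ≤ ℓ + 2)
    have h₅ := log_nonneg hℓ
    have h₆ := log_nonneg (by norm_num : (1 : ℝ) ≤ 4)
    rw [hlog_t, abs_le]
    constructor <;> linarith
  calc _ ≤ 9 / (4 * x * ℓ ^ 6) * (16 * ℓ) :=
        mul_le_mul ht_le habs_log_t (abs_nonneg _) (by positivity)
    _ = 36 / (x * ℓ ^ 5) := by field_simp; ring

noncomputable def counterexampleDeriv (x : ℝ) : ℝ :=
  1 / (2 * √x * log x ^ 3) - 1 / (√x * log x ^ 4)

@[fun_prop]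
theorem measurable_counterexampleDeriv : Measurable counterexampleDeriv := by
  unfold counterexampleDeriv
  fun_prop

theorem counterexampleDeriv_sq {x : ℝ} (hx : 0 < x) (hlog : log x ≠ 0) :
    counterexampleDeriv x ^ 2 = (-log x + 2) ^ 2 / (4 * x * (-log x) ^ 8) := by
  have hsqrt : √x ≠ 0 := (sqrt_pos.2 hx).ne'
  rw [counterexampleDeriv]
  field_simp
  rw [sq_sqrt hx.le]
  ring

theorem counterexampleDeriv_sq_pos {x : ℝ} (hx : 0 < x) (hlog : log x < 0) :
    0 < counterexampleDeriv x ^ 2 := by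
  rw [counterexampleDeriv_sq hx hlog.ne]
  have : 0 < -log x := neg_pos.2 hlog
  positivity

theorem counterexampleDeriv_sq_mul_abs_log_le {x : ℝ} (hx : 0 < x) (hlog : 1 ≤ -log x) :
    counterexampleDeriv x ^ 2 * |log (counterexampleDeriv x ^ 2)|
      ≤ 36 * (1 / (x * (-log x) ^ (5 : ℝ))) := by
  rw [counterexampleDeriv_sq hx (by linarith), rpow_ofNat, mul_one_div]
  exact mul_abs_log_le hx hlog (neg_neg _).symm

theorem stmt13_general (μ : ℝ) (hμ1 : μ < Real.exp (-1)) (F' ψ : ℝ → ℝ)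
    (hF' : ∀ x ∈ Ioc (0 : ℝ) μ,
      F' x = 1 / (2 * Real.sqrt x * Real.log x ^ 3) - 1 / (Real.sqrt x * Real.log x ^ 4))
    (hψ : ∀ x > (0 : ℝ), ψ x = x * |Real.log x|) :
    IntegrableOn (fun x => ψ (|F' x| ^ 2)) (Ioo 0 μ) volume := by
  have hneg_log : ∀ x ∈ Ioo 0 μ, 1 < -log x := fun x hx => by
    linarith [(log_lt_log hx.1 (hx.2.trans hμ1)).trans_eq (log_exp (-1))]
  have hψF : EqOn (fun x => counterexampleDeriv x ^ 2 * |log (counterexampleDeriv x ^ 2)|)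
      (fun x => ψ (|F' x| ^ 2)) (Ioo 0 μ) := fun x hx => by
    have hpos := counterexampleDeriv_sq_pos hx.1 (by linarith [hneg_log x hx])
    dsimp only
    rw [sq_abs, hF' x (Ioo_subset_Ioc_self hx)]
    exact (hψ _ hpos).symm
  have hbound := ((integrableOn_one_div_mul_neg_log_rpow
    (hμ1.trans (exp_lt_one_iff.2 (by norm_num))) (by norm_num : (1 : ℝ) < 5)).mono_set
      Ioo_subset_Ioc_self).const_mul 36
  refine IntegrableOn.congr_fun (hbound.mono' (by fun_prop) ?_) hψF measurableSet_Ioo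
  refine ae_restrict_of_forall_mem measurableSet_Ioo fun x hx => ?_
  rw [norm_of_nonneg (by positivity)]
  exact counterexampleDeriv_sq_mul_abs_log_le hx.1 (hneg_log x hx).le

/-- with `0 < μ < e⁻¹`, `F' x = 1/(2√x (log x)³) - 1/(√x (log x)⁴)` on
`(0, μ]`, and `ψ x = x |log x|` for `x > 0`, one has `∫_0^μ ψ(|F' x|²) dx < ∞`. -/
theorem stmt13 (μ : ℝ) (hμ0 : 0 < μ) (hμ1 : μ < Real.exp (-1)) (F' ψ : ℝ → ℝ)
    (hF' : ∀ x ∈ Ioc (0 : ℝ) μ,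
      F' x = 1 / (2 * Real.sqrt x * Real.log x ^ 3) - 1 / (Real.sqrt x * Real.log x ^ 4))
    (hψ : ∀ x > (0 : ℝ), ψ x = x * |Real.log x|) :
    IntegrableOn (fun x => ψ (|F' x| ^ 2)) (Ioo 0 μ) volume :=
  stmt13_general μ hμ1 F' ψ hF' hψ
end
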